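/- Let d ≥ 1 and M, α ∈ (0, ∞), and consider discrete long-range percolation on ℤ^d with connection function g(z) = M^{−α}(M − ‖z‖₁)^α·1{‖z‖₁ ≤ M}. For any constant K > 0 set c_n = K·n^{−d/(α+1)}. Then almost surely c_n^{−1}(e_n* − M) → −∞ as n → ∞ (in contrast to the continuous model, where this normalization yields a Weibull limit). -/

import Mathlib

open MeasureTheory ProbabilityTheory Filter
open scoped ENNReal

noncomputable section

namespace LRP

/-- The 1-norm distance between two points of `ℤ^d`, as a real number. -/
def dist1 {d : ℕ} (x y : Fin d → ℤ) : ℝ := ∑ i, |(x i : ℝ) - (y i : ℝ)|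

/-- The observation window `B_n = [-n, n]^d ∩ ℤ^d`. -/
def window (d n : ℕ) : Finset (Fin d → ℤ) :=
  Finset.Icc (fun _ => -(n : ℤ)) fun _ => (n : ℤ)

open scoped Classical in
/-- The number of exceedances `W(n)` at level `rn`: the number of points `x` of the window
which are an endpoint of an edge of length `> rn`. -/
def numExceed {d : ℕ} {Ω : Type*} (Edge : Sym2 (Fin d → ℤ) → Set Ω) (n : ℕ) (rn : ℝ)
    (ω : Ω) : ℕ :=
  ((window d n).filter fun x => ∃ y, ω ∈ Edge s(x, y) ∧ rn < dist1 x y).card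

/-- The length `e_n^*` of the longest edge with at least one endpoint in the window. -/
def maxEdge {d : ℕ} {Ω : Type*} (Edge : Sym2 (Fin d → ℤ) → Set Ω) (n : ℕ) (ω : Ω) : ℝ≥0∞ :=
  ⨆ x ∈ window d n, ⨆ y : Fin d → ℤ,
    (Edge s(x, y)).indicator (fun _ => ENNReal.ofReal (dist1 x y)) ω

/-- The `ℕ`-valued random variables `W n` converge in distribution to a Poisson random
variable with parameter `μ`. -/
def TendstoPoisson {Ω : Type*} [MeasurableSpace Ω] (P : Measure Ω) (W : ℕ → Ω → ℕ)
    (μ : ℝ) : Prop :=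
  ∀ k : ℕ, Tendsto (fun n => (P {ω | W n ω = k}).toReal) atTop
    (nhds (Real.exp (-μ) * μ ^ k / (Nat.factorial k)))

end LRP

open LRP

/-!
Edge lengths are integers and `g` vanishes at every integer `≥ M`, so almost surely every edge
has length at most `⌈M⌉ - 1 < M`. Hence `e_n^* - M` stays below a negative constant while
`c_n → 0⁺`, and the quotient tends to `-∞`.
-/

namespace LRP

variable {d : ℕ}

theorem dist1_self (x : Fin d → ℤ) : dist1 x x = 0 := by
  simp [dist1]

theorem dist1_eq_intCast (x y : Fin d → ℤ) : dist1 x y = ((∑ i, |x i - y i| : ℤ) : ℝ) := by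
  push_cast [dist1]
  rfl

theorem dist1_le_ceil_sub_one {M : ℝ} {x y : Fin d → ℤ} (h : dist1 x y < M) :
    dist1 x y ≤ (⌈M⌉ : ℝ) - 1 := by
  rw [dist1_eq_intCast] at h ⊢
  have : (∑ i, |x i - y i|) ≤ ⌈M⌉ - 1 := by
    have := Int.lt_ceil.mpr h
    omega
  exact_mod_cast this

theorem connection_eq_zero {M α r : ℝ} (hα : 0 < α) (hr : M ≤ r) :
    (if r ≤ M then M ^ (-α) * (M - r) ^ α else 0) = 0 := by
  split_ifs with h
  · rw [le_antisymm h hr, sub_self, Real.zero_rpow hα.ne', mul_zero]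
  · rfl

theorem ae_dist1_lt_of_mem_edge {Ω : Type*} [MeasurableSpace Ω] {P : Measure Ω}
    {Edge : Sym2 (Fin d → ℤ) → Set Ω} {M α : ℝ} (hM : 0 < M) (hα : 0 < α)
    (hMarg : ∀ x y : Fin d → ℤ, x ≠ y →
      P (Edge s(x, y)) = ENNReal.ofReal
        (if dist1 x y ≤ M then M ^ (-α) * (M - dist1 x y) ^ α else 0)) :
    ∀ᵐ ω ∂P, ∀ x y : Fin d → ℤ, ω ∈ Edge s(x, y) → dist1 x y < M := by
  simp only [ae_all_iff]
  intro x y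
  rcases lt_or_ge (dist1 x y) M with hlt | hge
  · exact ae_of_all _ fun _ _ => hlt
  have hxy : x ≠ y := by
    rintro rfl
    linarith [dist1_self x]
  have hnull : P (Edge s(x, y)) = 0 := by
    rw [hMarg x y hxy, connection_eq_zero hα hge, ENNReal.ofReal_zero]
  filter_upwards [measure_eq_zero_iff_ae_notMem.mp hnull] with ω hω hmem
  exact absurd hmem hω

theorem maxEdge_toReal_le {Ω : Type*} {Edge : Sym2 (Fin d → ℤ) → Set Ω} {ω : Ω} {m : ℝ}
    (hm : 0 ≤ m) (h : ∀ x y : Fin d → ℤ, ω ∈ Edge s(x, y) → dist1 x y ≤ m) (n : ℕ) :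
    (maxEdge Edge n ω).toReal ≤ m := by
  refine ENNReal.toReal_le_of_le_ofReal hm (iSup₂_le fun x _ => iSup_le fun y => ?_)
  by_cases hxy : ω ∈ Edge s(x, y)
  · rw [Set.indicator_of_mem hxy]
    exact ENNReal.ofReal_le_ofReal (h x y hxy)
  · rw [Set.indicator_of_notMem hxy]
    exact zero_le

end LRP

theorem tendsto_div_const_mul_rpow_atBot {u : ℕ → ℝ} {c K γ : ℝ} (hc : c < 0)
    (hu : ∀ n, u n ≤ c) (hK : 0 < K) (hγ : γ < 0) :
    Tendsto (fun n : ℕ => u n / (K * (n : ℝ) ^ γ)) atTop atBot := by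
  have hpow : Tendsto (fun n : ℕ => (n : ℝ) ^ (-γ)) atTop atTop :=
    (tendsto_rpow_atTop (neg_pos.mpr hγ)).comp tendsto_natCast_atTop_atTop
  have hlim : Tendsto (fun n : ℕ => c / K * (n : ℝ) ^ (-γ)) atTop atBot :=
    hpow.const_mul_atTop_of_neg (div_neg_of_neg_of_pos hc hK)
  refine tendsto_atBot_mono' atTop ?_ hlim
  filter_upwards [eventually_ge_atTop 1] with n hn
  have hn0 : (0 : ℝ) < n := by exact_mod_cast hn
  calc u n / (K * (n : ℝ) ^ γ) ≤ c / (K * (n : ℝ) ^ γ) :=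
        div_le_div_of_nonneg_right (hu n) (mul_pos hK (Real.rpow_pos_of_pos hn0 γ)).le
    _ = c / K * (n : ℝ) ^ (-γ) := by rw [Real.rpow_neg hn0.le]; field_simp

theorem discrete_LRP_weibull_fails_general
    (d : ℕ) (hd : 1 ≤ d) (M α : ℝ) (hM : 0 < M) (hα : 0 < α)
    (Ω : Type*) [MeasurableSpace Ω] (P : Measure Ω)
    (Edge : Sym2 (Fin d → ℤ) → Set Ω)
    (hMarg : ∀ x y : Fin d → ℤ, x ≠ y →
      P (Edge s(x, y)) = ENNReal.ofReal
        (if dist1 x y ≤ M then M ^ (-α) * (M - dist1 x y) ^ α else 0)) :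
    ∀ K : ℝ, 0 < K →
      ∀ᵐ ω ∂P, Tendsto
        (fun n : ℕ => ((maxEdge Edge n ω).toReal - M) / (K * (n : ℝ) ^ (-(d : ℝ) / (α + 1))))
        atTop atBot := by
  intro K hK
  have hexp : -(d : ℝ) / (α + 1) < 0 :=
    div_neg_of_neg_of_pos (neg_neg_of_pos (by exact_mod_cast hd)) (by linarith)
  have hceil : (⌈M⌉ : ℝ) - 1 < M := by linarith [Int.ceil_lt_add_one M]
  have hceil_nonneg : (0 : ℝ) ≤ (⌈M⌉ : ℝ) - 1 := by
    have : (0 : ℤ) < ⌈M⌉ := Int.ceil_pos.mpr hM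
    have : (1 : ℝ) ≤ ⌈M⌉ := by exact_mod_cast this
    linarith
  filter_upwards [ae_dist1_lt_of_mem_edge hM hα hMarg] with ω hω
  refine tendsto_div_const_mul_rpow_atBot (sub_neg.mpr hceil) (fun n => ?_) hK hexp
  have hmax := maxEdge_toReal_le hceil_nonneg (fun x y hxy => dist1_le_ceil_sub_one (hω x y hxy)) n
  linarith

/-- **Failure of the Weibull limit for discrete long-range percolation on `ℤ^d`.**
For the connection function `g(z) = M^(-α)(M - ‖z‖₁)^α 1{‖z‖₁ ≤ M}`, for any constant
`K > 0`, setting `c_n = K n^(-d/(α+1))`, almost surely `c_n⁻¹(e_n^* - M) → -∞` as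
`n → ∞` (here `e_n^*` is set to `0` if no edge meets the window). -/
theorem discrete_LRP_weibull_fails
    (d : ℕ) (hd : 1 ≤ d) (M α : ℝ) (hM : 0 < M) (hα : 0 < α)
    (Ω : Type*) [MeasurableSpace Ω] (P : Measure Ω) [IsProbabilityMeasure P]
    (Edge : Sym2 (Fin d → ℤ) → Set Ω)
    (hMeas : ∀ p, MeasurableSet (Edge p))
    (hDiag : ∀ x, Edge s(x, x) = ∅)
    (hInd : iIndepSet Edge P)
    (hMarg : ∀ x y : Fin d → ℤ, x ≠ y →
      P (Edge s(x, y)) = ENNReal.ofReal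
        (if dist1 x y ≤ M then M ^ (-α) * (M - dist1 x y) ^ α else 0)) :
    ∀ K : ℝ, 0 < K →
      ∀ᵐ ω ∂P, Tendsto
        (fun n : ℕ => ((maxEdge Edge n ω).toReal - M) / (K * (n : ℝ) ^ (-(d : ℝ) / (α + 1))))
        atTop atBot :=
  discrete_LRP_weibull_fails_general d hd M α hM hα Ω P Edge hMarg
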